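/- arXiv:1308.3937 — 5 statements merged into one kernel-verified Lean document; each statement's English description precedes it below -/
import Mathlib

section
/- Let X be a set of n Boolean variables and Θ = {θ₁,...,θ_m} a sequence of assignments over X such that for each i with 1 < i ≤ m, the assignment θ_i disqualifies at least one equation x = y (with x, y ∈ X ∪ {true}) that was determined by {θ₁,...,θ_{i-1}}. Then m ≤ n + 1. -/
/-- Auxiliary: a non-injective map on a finset strictly decreases cardinality. -/
lemma image_card_lt_of_not_inj {α β : Type*} [DecidableEq β]
    (f : α → β) (s : Finset α) {a b : α} (ha : a ∈ s) (hb : b ∈ s)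
    (hab : a ≠ b) (hf : f a = f b) : (s.image f).card < s.card := by
  classical
  have hsub : s.image f ⊆ (s.erase b).image f := by
    intro c hc
    simp only [Finset.mem_image] at hc ⊢
    obtain ⟨d, hd, rfl⟩ := hc
    by_cases hdb : d = b
    · exact ⟨a, Finset.mem_erase.mpr ⟨hab, ha⟩, by rw [hdb, ← hf]⟩
    · exact ⟨d, Finset.mem_erase.mpr ⟨hdb, hd⟩, rfl⟩
  calc (s.image f).card ≤ ((s.erase b).image f).card := Finset.card_le_card hsub
    _ ≤ (s.erase b).card := Finset.card_image_le
    _ < s.card := Finset.card_erase_lt_of_mem hb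

/-- Normalized signature of `x` after step `i`. -/
def sigF {V : Type} {m : ℕ} (θ : Fin m → Option V → Bool) (z : Fin m)
    (i : ℕ) (x : Option V) : Fin m → Bool :=
  fun j => if (j : ℕ) ≤ i then xor (θ j x) (θ z x) else false

lemma sigF_apply {V : Type} {m : ℕ} (θ : Fin m → Option V → Bool) (z : Fin m)
    (i : ℕ) (x : Option V) (j : Fin m) :
    sigF θ z i x j = if (j : ℕ) ≤ i then xor (θ j x) (θ z x) else false := rfl

lemma sigF_eq_iff {V : Type} {m : ℕ} (θ : Fin m → Option V → Bool)
    (hm : 0 < m) (i : ℕ) (x y : Option V) :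
    sigF θ ⟨0, hm⟩ i x = sigF θ ⟨0, hm⟩ i y ↔
      ((∀ j : Fin m, (j : ℕ) ≤ i → θ j x = θ j y) ∨
       (∀ j : Fin m, (j : ℕ) ≤ i → θ j x ≠ θ j y)) := by
  set z : Fin m := ⟨0, hm⟩ with hz
  constructor
  · intro h
    by_cases h0 : θ z x = θ z y
    · left
      intro j hj
      have hcj := congrFun h j
      rw [sigF_apply, sigF_apply, if_pos hj, if_pos hj, h0] at hcj
      cases hx : θ j x <;> cases hy : θ j y <;> simp_all
    · right
      intro j hj
      have hcj := congrFun h j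
      rw [sigF_apply, sigF_apply, if_pos hj, if_pos hj] at hcj
      cases hx : θ j x <;> cases hy : θ j y <;>
        cases hzx : θ z x <;> cases hzy : θ z y <;> simp_all
  · intro h
    funext j
    rw [sigF_apply, sigF_apply]
    by_cases hj : (j : ℕ) ≤ i
    · rw [if_pos hj, if_pos hj]
      have h0 : (z : ℕ) ≤ i := Nat.zero_le i
      rcases h with h | h
      · rw [h j hj, h z h0]
      · have h1 := h j hj
        have h2 := h z h0
        clear h
        cases hx : θ j x <;> cases hy : θ j y <;>
          cases hzx : θ z x <;> cases hzy : θ z y <;> simp_all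
    · rw [if_neg hj, if_neg hj]

lemma sigF_trunc {V : Type} {m : ℕ} (θ : Fin m → Option V → Bool) (z : Fin m)
    (i : ℕ) :
    sigF θ z i = (fun g (j : Fin m) => if (j : ℕ) ≤ i then g j else false) ∘
      sigF θ z (i + 1) := by
  funext x j
  by_cases hj : (j : ℕ) ≤ i
  · have hj' : (j : ℕ) ≤ i + 1 := le_trans hj (Nat.le_succ i)
    simp [sigF, hj, hj']
  · simp [sigF, hj]

/-- If a sequence of Boolean assignments over `X̂ = X ∪ {true}`
(`X` of size `n`, modelled as `Option V` with `none` the constant `true`)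
is such that each assignment after the first disqualifies at least one
equation determined by the preceding assignments, then the sequence has
length at most `n + 1`. -/
theorem stmt_0 {V : Type} [Fintype V] (n m : ℕ) (hn : Fintype.card V = n)
    (θ : Fin m → (Option V → Bool))
    (htrue : ∀ i, θ i none = true)
    (hdisq : ∀ i : Fin m, 0 < (i : ℕ) →
      ∃ x y : Option V,
        ((∀ j : Fin m, (j : ℕ) < (i : ℕ) → θ j x = θ j y) ∨
         (∀ j : Fin m, (j : ℕ) < (i : ℕ) → θ j x ≠ θ j y)) ∧
        ¬ ((∀ j : Fin m, (j : ℕ) ≤ (i : ℕ) → θ j x = θ j y) ∨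
           (∀ j : Fin m, (j : ℕ) ≤ (i : ℕ) → θ j x ≠ θ j y))) :
    m ≤ n + 1 := by
  classical
  rcases Nat.eq_zero_or_pos m with hm | hm
  · omega
  let z : Fin m := ⟨0, hm⟩
  let c : ℕ → ℕ := fun i => (Finset.image (sigF θ z i) Finset.univ).card
  have hlt : ∀ i : ℕ, i + 1 < m → c i < c (i + 1) := by
    intro i him
    obtain ⟨x, y, hdet, hndet⟩ := hdisq ⟨i + 1, him⟩ (by simp)
    simp only [Nat.lt_succ_iff] at hdet
    have hxy : sigF θ z i x = sigF θ z i y := (sigF_eq_iff θ hm i x y).mpr hdet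
    have hxy' : sigF θ z (i + 1) x ≠ sigF θ z (i + 1) y :=
      fun h => hndet ((sigF_eq_iff θ hm (i + 1) x y).mp h)
    have h1 : c i = ((Finset.univ.image (sigF θ z (i + 1))).image
        (fun g (j : Fin m) => if (j : ℕ) ≤ i then g j else false)).card := by
      show (Finset.image (sigF θ z i) Finset.univ).card = _
      rw [Finset.image_image, ← sigF_trunc θ z i]
    rw [h1]
    exact image_card_lt_of_not_inj _ _
      (Finset.mem_image_of_mem _ (Finset.mem_univ x))
      (Finset.mem_image_of_mem _ (Finset.mem_univ y))
      hxy'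
      (by
        have hx := congrFun (sigF_trunc θ z i) x
        have hy := congrFun (sigF_trunc θ z i) y
        simp only [Function.comp] at hx hy
        rw [← hx, ← hy]; exact hxy)
  have key : ∀ i : ℕ, i < m → i + 1 ≤ c i := by
    intro i
    induction i with
    | zero =>
      intro _
      have hmem : (sigF θ z 0 none) ∈ Finset.univ.image (sigF θ z 0) :=
        Finset.mem_image_of_mem _ (Finset.mem_univ none)
      exact Finset.card_pos.mpr ⟨sigF θ z 0 none, hmem⟩
    | succ i ih =>
      intro h
      have h1 := hlt i h
      have h2 := ih (by omega)
      omega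
  have h1 := key (m - 1) (by omega)
  have h2 : c (m - 1) ≤ n + 1 := by
    calc c (m - 1) ≤ (Finset.univ : Finset (Option V)).card := Finset.card_image_le
      _ = Fintype.card (Option V) := Finset.card_univ
      _ = n + 1 := by rw [Fintype.card_option, hn]
  omega
end

section
/- Let A ∈ [0,m], B ∈ [0,p], C ∈ [0,m+p] be integers with order-encodings [A₁,...,A_m], [B₁,...,B_p], [C₁,...,C_{m+p}]. Then A + B = C holds if and only if all of the following clauses hold: (Aᵢ → Cᵢ) for all i; (¬Aᵢ → ¬C_{p+i}) for all i; (B_j → C_j) for all j; (¬B_j → ¬C_{m+j}) for all j; (Aᵢ ∧ B_j → C_{i+j}) for all i, j; and (¬Aᵢ ∧ ¬B_j → ¬C_{i+j−1}) for all i, j. -/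
/-- Correctness of the unary adder CNF encoding of
`int_plus(A,B,C)` in the order-encoding.  Bits are 0-indexed: `a i`
is the 1-based bit `A_{i+1}`, and `A_i → C_i` etc. become the clauses below. -/
theorem stmt_7 (m p A B C : ℕ) (hA : A ≤ m) (hB : B ≤ p) (hC : C ≤ m + p)
    (a : Fin m → Bool) (b : Fin p → Bool) (c : Fin (m + p) → Bool)
    (ha : ∀ i : Fin m, a i = true ↔ (i : ℕ) + 1 ≤ A)
    (hb : ∀ j : Fin p, b j = true ↔ (j : ℕ) + 1 ≤ B)
    (hc : ∀ k : Fin (m + p), c k = true ↔ (k : ℕ) + 1 ≤ C) :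
    A + B = C ↔
      ((∀ i : Fin m, a i = true → c ⟨(i : ℕ), by omega⟩ = true) ∧
       (∀ i : Fin m, a i = false → c ⟨p + (i : ℕ), by omega⟩ = false) ∧
       (∀ j : Fin p, b j = true → c ⟨(j : ℕ), by omega⟩ = true) ∧
       (∀ j : Fin p, b j = false → c ⟨m + (j : ℕ), by omega⟩ = false) ∧
       (∀ (i : Fin m) (j : Fin p), a i = true → b j = true →
          c ⟨(i : ℕ) + (j : ℕ) + 1, by omega⟩ = true) ∧
       (∀ (i : Fin m) (j : Fin p), a i = false → b j = false →
          c ⟨(i : ℕ) + (j : ℕ), by omega⟩ = false)) := by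

  have ha' : ∀ i : Fin m, a i = false ↔ A ≤ (i : ℕ) := fun i => by
    rw [← Bool.not_eq_true, ha]; omega
  have hb' : ∀ j : Fin p, b j = false ↔ B ≤ (j : ℕ) := fun j => by
    rw [← Bool.not_eq_true, hb]; omega
  have hc' : ∀ k : Fin (m + p), c k = false ↔ C ≤ (k : ℕ) := fun k => by
    rw [← Bool.not_eq_true, hc]; omega
  constructor
  · intro h
    refine ⟨?_, ?_, ?_, ?_, ?_, ?_⟩
    · intro i hi; rw [ha] at hi; rw [hc]; simp; omega
    · intro i hi; rw [ha'] at hi; rw [hc']; simp; omega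
    · intro j hj; rw [hb] at hj; rw [hc]; simp; omega
    · intro j hj; rw [hb'] at hj; rw [hc']; simp; omega
    · intro i j hi hj; rw [ha] at hi; rw [hb] at hj; rw [hc]; simp; omega
    · intro i j hi hj; rw [ha'] at hi; rw [hb'] at hj; rw [hc']; simp; omega
  · rintro ⟨c1, c2, c3, c4, c5, c6⟩
    have hle : A + B ≤ C := by
      rcases Nat.eq_zero_or_pos A with hA0 | hA0
      · rcases Nat.eq_zero_or_pos B with hB0 | hB0
        · omega
        · have := c3 ⟨B - 1, by omega⟩ ((hb _).mpr (by simp; omega))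
          rw [hc] at this; simp at this; omega
      · rcases Nat.eq_zero_or_pos B with hB0 | hB0
        · have := c1 ⟨A - 1, by omega⟩ ((ha _).mpr (by simp; omega))
          rw [hc] at this; simp at this; omega
        · have := c5 ⟨A - 1, by omega⟩ ⟨B - 1, by omega⟩
            ((ha _).mpr (by simp; omega)) ((hb _).mpr (by simp; omega))
          rw [hc] at this; simp at this; omega
    have hge : C ≤ A + B := by
      rcases lt_or_eq_of_le hA with hAm | hAm
      · rcases lt_or_eq_of_le hB with hBp | hBp
        · have := c6 ⟨A, hAm⟩ ⟨B, hBp⟩ ((ha' _).mpr (by simp)) ((hb' _).mpr (by simp))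
          rw [hc'] at this; simp at this; omega
        · have := c2 ⟨A, hAm⟩ ((ha' _).mpr (by simp))
          rw [hc'] at this; simp at this; omega
      · rcases lt_or_eq_of_le hB with hBp | hBp
        · have := c4 ⟨B, hBp⟩ ((hb' _).mpr (by simp))
          rw [hc'] at this; simp at this; omega
        · omega
    omega
end

section
/- Let a and b be sorted (non-increasing) Boolean sequences, and let a_o, a_e (resp. b_o, b_e) denote their odd- and even-indexed subsequences. If c_o is the sorted merge of a_o and b_o, and c_e is the sorted merge of a_e and b_e, then the sequence obtained by applying comparators combining c_o and c_e as in Batcher's odd-even merge (outputting c₁ = c_{o,1}, then for each i the sorted pair of (c_{o,i+1}, c_{e,i}), then the final element) is the sorted merge of a and b. -/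
/-- The odd-positioned elements `x₁, x₃, …` of a list. -/
def oddsL : List Bool → List Bool
  | [] => []
  | [x] => [x]
  | x :: _ :: xs => x :: oddsL xs

/-- The even-positioned elements `x₂, x₄, …` of a list. -/
def evensL : List Bool → List Bool
  | [] => []
  | [_] => []
  | _ :: y :: xs => y :: evensL xs

/-- Apply a comparator to corresponding elements of the two lists,
appending any leftover tail. -/
def zipComp : List Bool → List Bool → List Bool
  | [], es => es
  | os, [] => os
  | o :: os, e :: es => (o || e) :: (o && e) :: zipComp os es

/-- Batcher's combine step: output the first element of `c_o`, then for each
`i` the comparator outputs on `(c_{o,i+1}, c_{e,i})`, then the final element. -/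
def combineL : List Bool → List Bool → List Bool
  | [], ce => ce
  | x :: co, ce => x :: zipComp co ce

open List

lemma odds_evens_cons : ∀ (l : List Bool) (x : Bool),
    oddsL (x :: l) = x :: evensL l ∧ evensL (x :: l) = oddsL l := by
  intro l
  induction l with
  | nil => intro x; simp [oddsL, evensL]
  | cons y xs ih =>
    intro x
    refine ⟨?_, ?_⟩
    · rw [oddsL, (ih y).2]
    · rw [evensL, (ih y).1]

lemma odds_cons (x : Bool) (l : List Bool) : oddsL (x :: l) = x :: evensL l :=
  (odds_evens_cons l x).1

lemma evens_cons (x : Bool) (l : List Bool) : evensL (x :: l) = oddsL l :=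
  (odds_evens_cons l x).2

lemma len_oe : ∀ l : List Bool,
    (oddsL l).length = (l.length + 1) / 2 ∧ (evensL l).length = l.length / 2 := by
  intro l
  induction l with
  | nil => simp [oddsL, evensL]
  | cons x xs ih =>
    rw [odds_cons, evens_cons]
    constructor
    · simp only [length_cons, ih.2]; omega
    · simp only [length_cons, ih.1]

lemma rep_false : ∀ m : ℕ,
    oddsL (replicate m false) = replicate ((m + 1) / 2) false ∧
    evensL (replicate m false) = replicate (m / 2) false := by
  intro m
  induction m with
  | zero => simp [oddsL, evensL]
  | succ n ih =>
    rw [replicate_succ, odds_cons, evens_cons, ih.1, ih.2]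
    refine ⟨?_, rfl⟩
    rw [show (n + 1 + 1) / 2 = n / 2 + 1 by omega, replicate_succ]

lemma count_oe : ∀ (k m : ℕ),
    (oddsL (replicate k true ++ replicate m false)).count true = (k + 1) / 2 ∧
    (evensL (replicate k true ++ replicate m false)).count true = k / 2 := by
  intro k
  induction k with
  | zero =>
    intro m
    simp [(rep_false m).1, (rep_false m).2, count_replicate]
  | succ n ih =>
    intro m
    rw [replicate_succ, cons_append, odds_cons, evens_cons]
    constructor
    · simp [count_cons, (ih m).2]; omega
    · simp [(ih m).1]

lemma count_tf : ∀ l : List Bool, l.count true + l.count false = l.length := by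
  intro l
  induction l with
  | nil => simp
  | cons x xs ih => cases x <;> simp [count_cons] <;> omega

lemma sorted_eq : ∀ l : List Bool, l.Pairwise (· ≥ ·) →
    l = replicate (l.count true) true ++ replicate (l.count false) false := by
  intro l
  induction l with
  | nil => simp
  | cons x xs ih =>
    intro h
    rcases pairwise_cons.mp h with ⟨hx, hxs⟩
    have hxs' := ih hxs
    cases x with
    | false =>
      have h0 : xs.count true = 0 := by
        rw [count_eq_zero]
        intro ht
        exact absurd (hx true ht) (by decide)
      rw [h0, replicate_zero, nil_append] at hxs'
      have e1 : count true (false :: xs) = 0 := by simp [count_cons, h0]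
      have e2 : count false (false :: xs) = count false xs + 1 := by simp [count_cons]
      rw [e1, e2, replicate_zero, nil_append, replicate_succ]
      exact congrArg (false :: ·) hxs'
    | true =>
      have e1 : count true (true :: xs) = count true xs + 1 := by simp [count_cons]
      have e2 : count false (true :: xs) = count false xs := by simp [count_cons]
      rw [e1, e2, replicate_succ, cons_append]
      exact congrArg (true :: ·) hxs'

lemma zip_ff : ∀ u v : ℕ,
    zipComp (replicate u false) (replicate v false) = replicate (u + v) false := by
  intro u
  induction u with
  | zero => intro v; simp [zipComp]
  | succ n ih =>
    intro v
    cases v with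
    | zero => simp [zipComp, replicate_succ]
    | succ w =>
      rw [replicate_succ, replicate_succ, zipComp, ih]
      simp only [Bool.or_self, Bool.and_self]
      rw [show n + 1 + (w + 1) = (n + w) + 1 + 1 by omega, replicate_succ, replicate_succ]

lemma zip_main : ∀ p q u v : ℕ, q ≤ p + 1 → p ≤ q + 1 →
    zipComp (replicate p true ++ replicate u false)
      (replicate q true ++ replicate v false) =
      replicate (p + q) true ++ replicate (u + v) false := by
  intro p
  induction p with
  | zero =>
    intro q u v hq hp
    interval_cases q
    · simpa using zip_ff u v
    · cases u with
      | zero => simp [zipComp]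
      | succ w =>
        simp only [replicate_zero, replicate_succ, nil_append, cons_append]
        rw [zipComp, zip_ff]
        rw [show w + 1 + v = (w + v) + 1 by omega, replicate_succ]
        simp
  | succ n ih =>
    intro q u v hq hp
    cases q with
    | zero =>
      have hn : n = 0 := by omega
      subst hn
      cases v with
      | zero => simp [zipComp]
      | succ w =>
        simp only [replicate_zero, replicate_succ, nil_append, cons_append]
        rw [zipComp, zip_ff]
        rw [show u + (w + 1) = (u + w) + 1 by omega, replicate_succ]
        simp
    | succ m =>
      rw [replicate_succ, replicate_succ, cons_append, cons_append, zipComp,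
        ih m u v (by omega) (by omega)]
      simp only [Bool.or_self, Bool.and_self]
      rw [show n + 1 + (m + 1) = (n + m) + 1 + 1 by omega, replicate_succ, replicate_succ]
      simp

lemma combine_main : ∀ p q u v : ℕ, q ≤ p → p ≤ q + 2 →
    combineL (replicate p true ++ replicate u false)
      (replicate q true ++ replicate v false) =
      replicate (p + q) true ++ replicate (u + v) false := by
  intro p q u v hq hp
  cases p with
  | zero =>
    have : q = 0 := by omega
    subst this
    cases u with
    | zero => simp [combineL]
    | succ w =>
      simp only [replicate_zero, replicate_succ, nil_append]
      rw [combineL, zip_ff]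
      rw [show w + 1 + v = (w + v) + 1 by omega, replicate_succ]
      simp
  | succ n =>
    rw [replicate_succ, cons_append, combineL,
      zip_main n q u v (by omega) (by omega)]
    rw [show n + 1 + q = (n + q) + 1 by omega, replicate_succ]
    simp

lemma sorted_rep (k m : ℕ) :
    List.Pairwise (· ≥ ·) (replicate k true ++ replicate m false) := by
  rw [pairwise_append]
  refine ⟨pairwise_replicate.mpr (Or.inr le_rfl),
    pairwise_replicate.mpr (Or.inr le_rfl), ?_⟩
  intro x hx y hy
  rw [eq_of_mem_replicate hx, eq_of_mem_replicate hy]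
  decide

/-- Correctness of Batcher's odd-even merge on Booleans
(ordered with `true > false`): if `c_o` is the sorted merge of the odd
subsequences of sorted `a` and `b`, and `c_e` the sorted merge of the even
subsequences, then combining them with comparators yields the sorted merge
of `a` and `b`. -/
theorem stmt_12 (a b co ce : List Bool)
    (ha : List.Pairwise (· ≥ ·) a) (hb : List.Pairwise (· ≥ ·) b)
    (hcoS : List.Pairwise (· ≥ ·) co) (hcoP : co.Perm (oddsL a ++ oddsL b))
    (hceS : List.Pairwise (· ≥ ·) ce) (hceP : ce.Perm (evensL a ++ evensL b)) :
    List.Pairwise (· ≥ ·) (combineL co ce) ∧ (combineL co ce).Perm (a ++ b) := by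
  have hae := sorted_eq a ha
  have hbe := sorted_eq b hb
  have hcoe := sorted_eq co hcoS
  have hcee := sorted_eq ce hceS
  have hta := count_tf a
  have htb := count_tf b
  have htco := count_tf co
  have htce := count_tf ce
  have hp : co.count true = (a.count true + 1) / 2 + (b.count true + 1) / 2 := by
    rw [hcoP.count_eq, count_append]
    conv_lhs => rw [hae, hbe]
    rw [(count_oe _ _).1, (count_oe _ _).1]
  have hq : ce.count true = a.count true / 2 + b.count true / 2 := by
    rw [hceP.count_eq, count_append]
    conv_lhs => rw [hae, hbe]
    rw [(count_oe _ _).2, (count_oe _ _).2]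
  have hlo : co.length = (a.length + 1) / 2 + (b.length + 1) / 2 := by
    rw [hcoP.length_eq, length_append, (len_oe a).1, (len_oe b).1]
  have hle : ce.length = a.length / 2 + b.length / 2 := by
    rw [hceP.length_eq, length_append, (len_oe a).2, (len_oe b).2]
  rw [hcoe, hcee, combine_main _ _ _ _ (by omega) (by omega)]
  refine ⟨sorted_rep _ _, List.perm_iff_count.mpr ?_⟩
  intro x
  cases x <;> simp [count_append, count_replicate] <;> omega
end

section
/- For a list of natural numbers [U₁,...,U_k] (buckets, least significant first) and a carry C, define buckets2binary recursively: the least significant output bit is (U₁ + C) mod 2 and the remaining output is buckets2binary of [U₂,...,U_k] with carry (U₁ + C) div 2; when the bucket list is empty, output the binary digits of C. Then the resulting bit string is the binary representation (least significant bit first) of Σᵢ Uᵢ · 2^{i−1} + C. -/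
/-- `buckets2binary`: from a list of unary buckets (least significant first)
and a carry, produce the bits (LSB first) of the sum. -/
def buckets2binary : List ℕ → ℕ → List Bool
  | [], c => Nat.bits c
  | u :: us, c => decide ((u + c) % 2 = 1) :: buckets2binary us ((u + c) / 2)

/-- Value of a bit string, least significant bit first. -/
def bitsVal : List Bool → ℕ
  | [] => 0
  | b :: bs => b.toNat + 2 * bitsVal bs

lemma bitsVal_bits (c : ℕ) : bitsVal (Nat.bits c) = c := by
  induction c using Nat.binaryRec with
  | zero => simp [bitsVal]
  | bit b n ih =>
    rcases eq_or_ne (Nat.bit b n) 0 with h | h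
    · simp [h, bitsVal]
    · have hn : n = 0 → b = true := by
        rintro rfl; cases b with
        | true => rfl
        | false => simp [Nat.bit] at h
      rw [Nat.bits_append_bit n b hn]
      cases b <;> simp [bitsVal, ih, Nat.bit] <;> omega

/-- `buckets2binary us c` is the binary representation (LSB
first) of `Σᵢ usᵢ · 2^i + c`. -/
theorem stmt_14 (us : List ℕ) (c : ℕ) :
    bitsVal (buckets2binary us c) =
      (∑ i ∈ Finset.range us.length, us.getD i 0 * 2 ^ i) + c := by
  induction us generalizing c with
  | nil => simp [buckets2binary, bitsVal_bits]
  | cons u us ih =>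
    simp only [buckets2binary, bitsVal, ih, List.length_cons,
      Finset.sum_range_succ']
    simp only [List.getD_cons_succ, List.getD_cons_zero, pow_succ, pow_zero,
      mul_one]
    have h2 : (2 : ℕ) ∣ 2 := dvd_refl 2
    have := Nat.div_add_mod (u + c) 2
    have hb : (decide ((u + c) % 2 = 1)).toNat = (u + c) % 2 := by
      rcases Nat.mod_two_eq_zero_or_one (u + c) with h | h <;> simp [h]
    rw [hb, mul_add, Finset.mul_sum]
    have : ∀ x ∈ Finset.range us.length, 2 * (us.getD x 0 * 2 ^ x) = us.getD x 0 * (2 ^ x * 2) := by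
      intro x _; ring
    rw [Finset.sum_congr rfl this]
    omega
end

section
/- If Θ (a nonempty set of assignments satisfying a formula φ over variables x₁,...,xₙ) is extended to assignments over φ' = φ ∧ ⋀_{i<j} (e_{ij} ↔ (xᵢ ↔ xⱼ)) (each model of φ extends uniquely), then e_{ij} belongs to the backbone of φ' if and only if φ ⊨ (xᵢ ↔ xⱼ), and ¬e_{ij} belongs to the backbone of φ' if and only if φ ⊨ (xᵢ ↔ ¬xⱼ). -/
/-- Index set for the fresh variables `e_{ij}`, `i < j`. -/
def EIdx (n : ℕ) := {p : Fin n × Fin n // p.1 < p.2}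

/-- `σ` is a model of `φ' = φ ∧ ⋀_{i<j} (e_{ij} ↔ (xᵢ ↔ xⱼ))`, where `φ` is
given semantically as a predicate on assignments to `x₁,…,xₙ`. -/
def ModelsExt (n : ℕ) (φ : (Fin n → Bool) → Prop)
    (σ : (Fin n ⊕ EIdx n) → Bool) : Prop :=
  φ (fun i => σ (Sum.inl i)) ∧
  ∀ q : EIdx n, σ (Sum.inr q) = (σ (Sum.inl q.1.1) == σ (Sum.inl q.1.2))

/-- For satisfiable `φ`, the literal `e_{ij}` is in the
backbone of `φ'` iff `φ ⊨ (xᵢ ↔ xⱼ)`, and `¬e_{ij}` is in the backbone of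
`φ'` iff `φ ⊨ (xᵢ ↔ ¬xⱼ)`. -/
theorem stmt_18 (n : ℕ) (φ : (Fin n → Bool) → Prop)
    (hsat : ∃ θ, φ θ) (q : EIdx n) :
    ((∀ σ : (Fin n ⊕ EIdx n) → Bool, ModelsExt n φ σ → σ (Sum.inr q) = true) ↔
        (∀ θ : Fin n → Bool, φ θ → θ q.1.1 = θ q.1.2)) ∧
    ((∀ σ : (Fin n ⊕ EIdx n) → Bool, ModelsExt n φ σ → σ (Sum.inr q) = false) ↔
        (∀ θ : Fin n → Bool, φ θ → θ q.1.1 = !(θ q.1.2))) := by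

  have ext : ∀ θ : Fin n → Bool, φ θ →
      ModelsExt n φ (Sum.elim θ (fun r => θ r.1.1 == θ r.1.2)) := by
    intro θ hθ
    exact ⟨hθ, fun r => rfl⟩
  constructor
  · constructor
    · intro h θ hθ
      have := h _ (ext θ hθ)
      simpa using this
    · intro h σ ⟨h1, h2⟩
      rw [h2 q]
      have := h _ h1
      simp [this]
  · constructor
    · intro h θ hθ
      have := h _ (ext θ hθ)
      simp at this
      cases hb : θ q.1.2 <;> simp [hb] at this ⊢ <;> simp [this]
    · intro h σ ⟨h1, h2⟩
      rw [h2 q]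
      have := h _ h1
      beta_reduce at this
      rw [this]
      cases σ (Sum.inl q.1.2) <;> rfl
end
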